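/- arXiv:1804.07712 — 6 statements merged into one kernel-verified Lean document; each statement's English description precedes it below -/
import Mathlib

section
/- For every integer n ≥ 1, a_{2n+1} := 2[ζ(2n+1) − (1 − 2^{−2n−1})ζ(2n+2)] satisfies a_{2n+1} > 4^{−n} ζ(2n+2) > 0. -/
/-! Since `(1 - 2^{-2n-1}) ζ(2n+2) = ζ(2n+2) - 4^{-n} ζ(2n+2) / 2`, the difference
`a_{2n+1} - 4^{-n} ζ(2n+2)` equals `2 (ζ(2n+1) - ζ(2n+2))`, which is positive because
`m ↦ ζ(m)` is strictly decreasing on `m ≥ 2` (compare the terms `2^{-m}`). -/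

noncomputable def zetaR (n : ℕ) : ℝ := ∑' k : ℕ, (1 : ℝ) / (k + 1) ^ n

lemma summable_one_div_succ_pow {m : ℕ} (hm : 1 < m) :
    Summable fun k : ℕ => (1 : ℝ) / (k + 1) ^ m := by
  have h := (summable_nat_add_iff 1).mpr (Real.summable_one_div_nat_pow.mpr hm)
  exact h.congr fun k => by push_cast; rfl

lemma zetaR_pos {m : ℕ} (hm : 1 < m) : 0 < zetaR m :=
  (summable_one_div_succ_pow hm).tsum_pos (fun _ => by positivity) 0 (by positivity)

lemma zetaR_succ_lt {m : ℕ} (hm : 1 < m) : zetaR (m + 1) < zetaR m := by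
  refine Summable.tsum_lt_tsum (i := 1) (fun k => ?_) ?_
    (summable_one_div_succ_pow (by omega)) (summable_one_div_succ_pow hm)
  · gcongr
    · exact le_add_of_nonneg_left k.cast_nonneg
    · omega
  · gcongr <;> norm_num

theorem a_odd_pos (n : ℕ) (hn : 1 ≤ n) :
    2 * (zetaR (2 * n + 1) - (1 - 1 / 2 ^ (2 * n + 1)) * zetaR (2 * n + 2)) >
      zetaR (2 * n + 2) / 4 ^ n ∧ zetaR (2 * n + 2) / 4 ^ n > 0 := by
  have hpos : 0 < zetaR (2 * n + 2) := zetaR_pos (by omega)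
  have hlt : zetaR (2 * n + 2) < zetaR (2 * n + 1) := zetaR_succ_lt (by omega)
  have hsplit : 2 * (zetaR (2 * n + 1) - (1 - 1 / 2 ^ (2 * n + 1)) * zetaR (2 * n + 2)) =
      2 * (zetaR (2 * n + 1) - zetaR (2 * n + 2)) + zetaR (2 * n + 2) / 4 ^ n := by
    rw [pow_succ, pow_mul]
    ring
  constructor
  · rw [hsplit]
    linarith
  · positivity
end

section
/- For every integer n ≥ 2, ζ(n+1) > (1 − (1 − μ)/(2^{n−1} − μ)) ζ(n), where μ = 65/108. -/
namespace ZetaAux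

lemma summable_aux (n c : ℕ) (hn : 2 ≤ n) :
    Summable (fun k : ℕ => (1:ℝ)/((k:ℝ)+c)^n) := by
  have h := Real.summable_one_div_nat_pow.2 hn
  have h2 := (summable_nat_add_iff c).2 h
  exact h2.congr (by intro k; push_cast; ring)

noncomputable def g (n k : ℕ) : ℝ :=
  ((2:ℝ)^(n-1) - 65/108) * (1/((k:ℝ)+2)^n - 1/((k:ℝ)+2)^(n+1))
    - 43/108 * (1/((k:ℝ)+2)^n)

lemma summable_g (n : ℕ) (hn : 2 ≤ n) : Summable (g n) := by
  have S2 := summable_aux n 2 hn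
  have S3 := summable_aux (n+1) 2 (by omega)
  exact ((S2.sub S3).mul_left _).sub (S2.mul_left _)

lemma telescope (x : ℝ) (hx : 0 < x) :
    ∀ N : ℕ, ∑ k ∈ Finset.range N, 1/((x+(k:ℝ))*(x+(k:ℝ)+1)) = 1/x - 1/(x+(N:ℝ))
  | 0 => by simp
  | (N+1) => by
    rw [Finset.sum_range_succ, telescope x hx N]
    have h1 : 0 < x + (N:ℝ) := by positivity
    have h2 : 0 < x + (N:ℝ) + 1 := by positivity
    push_cast
    field_simp
    ring

lemma tail_le (g : ℕ → ℝ) (c x : ℝ) (hx : 0 < x)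
    (h0 : ∀ k, 0 ≤ g k)
    (h : ∀ k : ℕ, g k ≤ c * (1/((x+(k:ℝ))*(x+(k:ℝ)+1)))) :
    ∑' k, g k ≤ c / x := by
  have hp : (0:ℝ) < 1/((x+(0:ℕ):ℝ)*((x+(0:ℕ):ℝ)+1)) := by positivity
  have hc : 0 ≤ c := by nlinarith [(h0 0).trans (h 0), hp]
  apply Real.tsum_le_of_sum_range_le h0
  intro N
  calc ∑ k ∈ Finset.range N, g k
      ≤ ∑ k ∈ Finset.range N, c * (1/((x+(k:ℝ))*(x+(k:ℝ)+1))) :=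
        Finset.sum_le_sum (fun k _ => h k)
    _ = c * (1/x - 1/(x+(N:ℝ))) := by rw [← Finset.mul_sum, telescope x hx N]
    _ ≤ c * (1/x) := by
        have h3 : (0:ℝ) ≤ 1/(x+(N:ℝ)) := by positivity
        nlinarith
    _ = c / x := by rw [mul_one_div]

lemma case2 : ∑' k, g 2 k < 43/108 := by
  have Sg : Summable (g 2) := summable_g 2 le_rfl
  rw [Summable.tsum_eq_zero_add Sg, Summable.tsum_eq_zero_add ((summable_nat_add_iff 1).2 Sg)]
  have key : ∀ k : ℕ, g 2 (k+1+1) = (((k:ℝ)+4) - 151/108)/((k:ℝ)+4)^3 := by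
    intro k
    have h : (0:ℝ) < (k:ℝ)+4 := by positivity
    simp only [g]; push_cast; field_simp; ring
  have htail : ∑' k, g 2 (k+1+1) ≤ 1/4 := by
    have := tail_le (fun k => g 2 (k+1+1)) 1 4 (by norm_num)
      (fun k => by
        show (0:ℝ) ≤ g 2 (k+1+1)
        rw [key k]
        have hk : (0:ℝ) ≤ (k:ℝ) := Nat.cast_nonneg k
        exact div_nonneg (by linarith) (by positivity))
      (fun k => by
        show g 2 (k+1+1) ≤ _
        rw [key k, one_mul]
        have h : (0:ℝ) < (k:ℝ)+4 := by positivity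
        rw [div_le_div_iff₀ (by positivity) (by positivity)]
        nlinarith [sq_nonneg ((k:ℝ)+4)])
    norm_num at this
    exact this
  have h0 : g 2 0 = 65/864 := by norm_num [g]
  have h1 : g 2 1 = 173/2916 := by norm_num [g]
  rw [h0, h1]
  norm_num
  linarith

lemma case3 : ∑' k, g 3 k < 43/108 := by
  have Sg : Summable (g 3) := summable_g 3 (by norm_num)
  rw [Summable.tsum_eq_zero_add Sg, Summable.tsum_eq_zero_add ((summable_nat_add_iff 1).2 Sg),
    Summable.tsum_eq_zero_add ((summable_nat_add_iff 1).2 ((summable_nat_add_iff 1).2 Sg))]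
  have key : ∀ k : ℕ, g 3 (k+1+1+1) = (3*((k:ℝ)+5) - 367/108)/((k:ℝ)+5)^4 := by
    intro k
    have h : (0:ℝ) < (k:ℝ)+5 := by positivity
    simp only [g]; push_cast; field_simp; ring
  have htail : ∑' k, g 3 (k+1+1+1) ≤ (3/5)/5 := by
    apply tail_le (fun k => g 3 (k+1+1+1)) (3/5) 5 (by norm_num)
    · intro k
      show (0:ℝ) ≤ g 3 (k+1+1+1)
      rw [key k]
      have h : (0:ℝ) < (k:ℝ)+5 := by positivity
      have h5 : (367:ℝ)/108 ≤ 3*((k:ℝ)+5) := by nlinarith [Nat.cast_nonneg (α := ℝ) k]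
      exact div_nonneg (by linarith) (by positivity)
    · intro k
      show g 3 (k+1+1+1) ≤ _
      rw [key k]
      have h : (0:ℝ) < (k:ℝ)+5 := by positivity
      rw [mul_one_div, div_le_div_iff₀ (by positivity) (by positivity)]
      have hk : (0:ℝ) ≤ (k:ℝ) := Nat.cast_nonneg k
      nlinarith [pow_pos h 3, mul_nonneg (mul_nonneg hk hk) hk, sq_nonneg ((k:ℝ)+5)]
  have h0 : g 3 0 = 281/1728 := by norm_num [g]
  have h1 : g 3 1 = 605/8748 := by norm_num [g]
  have h2 : g 3 2 = 929/27648 := by norm_num [g]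
  rw [h0, h1, h2]
  norm_num at htail ⊢
  linarith

set_option maxHeartbeats 1000000 in
set_option maxHeartbeats 1000000 in
lemma case4 (j : ℕ) : ∑' k, g (j+4) k < 43/108 := by
  have hq : (0:ℝ) < 2^j := by positivity
  have hr : (0:ℝ) < 3^j := by positivity
  set q : ℝ := (2:ℝ)^j with hqdef
  set r : ℝ := (3:ℝ)^j with hrdef
  have hq1 : (1:ℝ) ≤ q := one_le_pow₀ (by norm_num)
  set s : ℝ := ((1:ℝ)/2)^j with hsdef
  set t : ℝ := ((2:ℝ)/3)^j with htdef
  have hs : s = 1/q := by rw [hsdef, hqdef, div_pow, one_pow]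
  have ht : t = q/r := by rw [htdef, hqdef, hrdef, div_pow]
  have hst : s ≤ t := pow_le_pow_left₀ (by norm_num) (by norm_num) j
  have ht1 : t ≤ 1 := pow_le_one₀ (by norm_num) (by norm_num)
  have hs0 : 0 < s := by positivity
  have e1 : ((j+4)-1 : ℕ) = j+3 := rfl
  have p3 : (2:ℝ)^(j+3) = 8*q := by rw [hqdef, pow_add]; ring
  have p4 : (2:ℝ)^(j+4) = 16*q := by rw [hqdef, pow_add]; ring
  have p5 : (2:ℝ)^(j+4+1) = 32*q := by rw [hqdef, pow_add]; ring
  have q4 : (3:ℝ)^(j+4) = 81*r := by rw [hrdef, pow_add]; ring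
  have q5 : (3:ℝ)^(j+4+1) = 243*r := by rw [hrdef, pow_add]; ring
  have Sg : Summable (g (j+4)) := summable_g (j+4) (by omega)
  rw [Summable.tsum_eq_zero_add Sg, Summable.tsum_eq_zero_add ((summable_nat_add_iff 1).2 Sg)]
  -- first term
  have h0 : g (j+4) 0 = 1/4 - (151/3456)*s := by
    have e : g (j+4) 0
        = ((2:ℝ)^(j+3) - 65/108) * (1/(2:ℝ)^(j+4) - 1/(2:ℝ)^(j+4+1))
          - 43/108 * (1/(2:ℝ)^(j+4)) := by
      simp [g, e1]
    rw [e, p3, p4, p5, hs]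
    field_simp
    ring
  -- second term
  have h1 : g (j+4) 1 ≤ (16/243)*t := by
    have e : g (j+4) 1
        = ((2:ℝ)^(j+3) - 65/108) * (1/(3:ℝ)^(j+4) - 1/(3:ℝ)^(j+4+1))
          - 43/108 * (1/(3:ℝ)^(j+4)) := by
      simp [g, e1]
      norm_num
    have e2 : g (j+4) 1 = (16/243)*(q/r) - (259/26244)*(1/r) := by
      rw [e, p3, q4, q5]
      field_simp
      ring
    have hrp : 0 < (259/26244)*(1/r) := by positivity
    rw [ht, e2]
    linarith
  -- tail
  have htail : ∑' k, g (j+4) (k+1+1) ≤ (s/2)/4 := by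
    have key : ∀ k : ℕ, g (j+4) (k+1+1)
        = (((2:ℝ)^(j+3) - 65/108)*(((k:ℝ)+4)-1) - (43/108)*((k:ℝ)+4))
          / (((k:ℝ)+4)^(j+2)*((k:ℝ)+4)^3) := by
      intro k
      have hm : (0:ℝ) < (k:ℝ)+4 := by positivity
      have hd : ((k:ℝ)+4)^(j+2)*((k:ℝ)+4)^3 = ((k:ℝ)+4)^(j+4)*((k:ℝ)+4) := by
        rw [← pow_add, ← pow_succ]
      simp only [g, e1]
      push_cast
      rw [hd, pow_succ]
      have h4 : ((k:ℝ)+1+1+2) = (k:ℝ)+4 := by ring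
      rw [h4]
      field_simp
      ring
    apply tail_le _ (s/2) 4 (by norm_num)
    · intro k
      show (0:ℝ) ≤ g (j+4) (k+1+1)
      rw [key k]
      have hk : (0:ℝ) ≤ (k:ℝ) := Nat.cast_nonneg k
      apply div_nonneg _ (by positivity)
      rw [p3]
      nlinarith [mul_nonneg (by linarith : (0:ℝ) ≤ 8*q - 65/108 - 1) (by linarith : (0:ℝ) ≤ (k:ℝ)+4-1)]
    · intro k
      show g (j+4) (k+1+1) ≤ _
      rw [key k, p3]
      have hk : (0:ℝ) ≤ (k:ℝ) := Nat.cast_nonneg k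
      set m : ℝ := (k:ℝ)+4 with hmdef
      have hm0 : (0:ℝ) < m := by positivity
      have hm4 : (4:ℝ) ≤ m := by rw [hmdef]; linarith
      have hpowle : (4:ℝ)^(j+2) ≤ m^(j+2) := pow_le_pow_left₀ (by norm_num) hm4 _
      have h44 : (4:ℝ)^(j+2) = 16*q^2 := by
        rw [hqdef, pow_add]
        have : (4:ℝ)^j = 2^j * 2^j := by rw [← mul_pow]; norm_num
        rw [this]; ring
      calc ((8*q - 65/108)*(m-1) - (43/108)*m) / (m^(j+2)*m^3)
          ≤ (8*q*(m-1)) / (m^(j+2)*m^3) := by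
            have hd : (0:ℝ) < m^(j+2)*m^3 := by positivity
            exact (div_le_div_iff_of_pos_right hd).mpr (by nlinarith)
        _ ≤ (8*q*(m-1)) / ((4:ℝ)^(j+2)*m^3) := by
            have hnum : (0:ℝ) ≤ 8*q*(m-1) := by nlinarith
            have hd2 : (0:ℝ) < (4:ℝ)^(j+2)*m^3 := by positivity
            exact div_le_div_of_nonneg_left hnum hd2
              (mul_le_mul_of_nonneg_right hpowle (by positivity))
        _ = (s/2) * ((m-1)/m^3) := by
            rw [h44, hs]
            field_simp
            ring
        _ ≤ (s/2) * (1/(m*(m+1))) := by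
            apply mul_le_mul_of_nonneg_left ?_ (by positivity)
            rw [div_le_div_iff₀ (by positivity) (by positivity)]
            nlinarith
        _ = (s/2) * (1/((4+(k:ℝ))*(4+(k:ℝ)+1))) := by rw [hmdef]; ring_nf
  rw [h0]
  have : (s/2)/4 = s/8 := by ring
  rw [this] at htail
  linarith

lemma reduction (n : ℕ) (hn : 2 ≤ n) (hS : ∑' k, g n k < 43/108) :
    zetaR (n + 1) > (1 - (1 - 65 / 108) / (2 ^ (n - 1) - 65 / 108 : ℝ)) * zetaR n := by
  have h2 : (2:ℝ) ≤ 2^(n-1) := by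
    calc (2:ℝ) = 2^1 := (pow_one 2).symm
    _ ≤ 2^(n-1) := pow_le_pow_right₀ one_le_two (by omega)
  set P : ℝ := (2:ℝ)^(n-1) - 65/108 with hPdef
  have hP : 0 < P := by rw [hPdef]; linarith
  have Sa : Summable (fun k : ℕ => (1:ℝ)/((k:ℝ)+1)^n) := by
    simpa using summable_aux n 1 hn
  have Sb : Summable (fun k : ℕ => (1:ℝ)/((k:ℝ)+1)^(n+1)) := by
    simpa using summable_aux (n+1) 1 (by omega)
  set F : ℕ → ℝ := fun k =>
    P * ((1:ℝ)/((k:ℝ)+1)^(n+1) - 1/((k:ℝ)+1)^n) + 43/108 * ((1:ℝ)/((k:ℝ)+1)^n) with hF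
  have SF : Summable F := ((Sb.sub Sa).mul_left P).add (Sa.mul_left _)
  have htsumF : ∑' k, F k = P * (zetaR (n+1) - zetaR n) + 43/108 * zetaR n := by
    rw [hF]
    rw [Summable.tsum_add ((Sb.sub Sa).mul_left P) (Sa.mul_left _), tsum_mul_left, tsum_mul_left,
      Summable.tsum_sub Sb Sa]
    rfl
  have hshift : (fun k : ℕ => F (k+1)) = fun k => -(g n k) := by
    funext k
    simp only [hF, g]
    push_cast
    ring
  have hsplit : ∑' k, F k = 43/108 - ∑' k, g n k := by
    rw [Summable.tsum_eq_zero_add SF]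
    have hF0 : F 0 = 43/108 := by norm_num [hF]
    rw [hF0, hshift, tsum_neg]
    ring
  have hpos : 0 < P * (zetaR (n+1) - zetaR n) + 43/108 * zetaR n := by
    rw [← htsumF, hsplit]; linarith
  rw [gt_iff_lt, ← sub_pos]
  have key : zetaR (n+1) - (1 - (1 - 65/108)/P) * zetaR n
      = (P * (zetaR (n+1) - zetaR n) + 43/108 * zetaR n) / P := by
    field_simp
    ring
  rw [key]
  exact div_pos hpos hP

end ZetaAux

theorem zeta_lower (n : ℕ) (hn : 2 ≤ n) :
    zetaR (n + 1) > (1 - (1 - 65 / 108) / (2 ^ (n - 1) - 65 / 108 : ℝ)) * zetaR n := by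
  match n, hn with
  | 2, _ => exact ZetaAux.reduction 2 le_rfl ZetaAux.case2
  | 3, _ => exact ZetaAux.reduction 3 (by norm_num) ZetaAux.case3
  | (j+4), _ => exact ZetaAux.reduction (j+4) (by omega) (ZetaAux.case4 j)
end

section
/- For every integer n ≥ 2, ζ(n+1) < (ζ(n) + 1)/2 < ζ(n). -/
lemma summ_shift (n m : ℕ) (hn : 2 ≤ n) :
    Summable (fun k : ℕ => (1 : ℝ) / ((k : ℝ) + m) ^ n) := by
  have h := (Real.summable_one_div_nat_pow (p := n)).2 hn
  have h2 := (summable_nat_add_iff m).2 h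
  refine h2.congr fun k => ?_
  push_cast
  ring_nf

lemma zetaR_split (n : ℕ) (hn : 2 ≤ n) :
    zetaR n = 1 + ∑' k : ℕ, (1 : ℝ) / ((k : ℝ) + 2) ^ n := by
  have hs : Summable (fun k : ℕ => (1 : ℝ) / ((k : ℝ) + 1) ^ n) := by
    simpa using summ_shift n 1 hn
  rw [zetaR, Summable.tsum_eq_zero_add hs]
  push_cast
  norm_num
  congr 1
  ext k
  ring_nf

theorem zeta_upper (n : ℕ) (hn : 2 ≤ n) :
    zetaR (n + 1) < (zetaR n + 1) / 2 ∧ (zetaR n + 1) / 2 < zetaR n := by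
  have hn1 : 2 ≤ n + 1 := by omega
  have hsn : Summable (fun k : ℕ => (1 : ℝ) / ((k : ℝ) + 2) ^ n) := summ_shift n 2 hn
  have hsn1 : Summable (fun k : ℕ => (1 : ℝ) / ((k : ℝ) + 2) ^ (n + 1)) :=
    summ_shift (n + 1) 2 hn1
  have hpos : ∀ k : ℕ, (0 : ℝ) < ((k : ℝ) + 2) := fun k => by positivity
  have key : ∑' k : ℕ, (1 : ℝ) / ((k : ℝ) + 2) ^ (n + 1)
      < (∑' k : ℕ, (1 : ℝ) / ((k : ℝ) + 2) ^ n) / 2 := by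
    rw [lt_div_iff₀ (by norm_num : (0:ℝ) < 2)]
    have h2 : ∑' k : ℕ, (1 : ℝ) / ((k : ℝ) + 2) ^ (n + 1) * 2
        < ∑' k : ℕ, (1 : ℝ) / ((k : ℝ) + 2) ^ n := by
      refine Summable.tsum_lt_tsum_of_nonneg (i := 1) (fun k => by positivity) (fun k => ?_) ?_ hsn
      · have hk := hpos k
        rw [pow_succ]
        rw [div_mul_eq_mul_div, one_mul, div_le_div_iff₀ (by positivity) (by positivity)]
        nlinarith [pow_pos hk n]
      · have : ((1 : ℕ) : ℝ) + 2 = 3 := by norm_num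
        rw [this, pow_succ]
        rw [div_mul_eq_mul_div, one_mul, div_lt_div_iff₀ (by positivity) (by positivity)]
        nlinarith [pow_pos (show (0:ℝ) < 3 by norm_num) n]
    calc (∑' k : ℕ, (1 : ℝ) / ((k : ℝ) + 2) ^ (n + 1)) * 2
        = ∑' k : ℕ, (1 : ℝ) / ((k : ℝ) + 2) ^ (n + 1) * 2 := by
          rw [tsum_mul_right]
      _ < _ := h2
  have tailpos : 0 < ∑' k : ℕ, (1 : ℝ) / ((k : ℝ) + 2) ^ n := by
    refine Summable.tsum_pos hsn (fun k => by positivity) 0 (by positivity)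
  constructor
  · rw [zetaR_split (n + 1) hn1, zetaR_split n hn]
    linarith
  · rw [zetaR_split n hn]
    linarith
end

section
/- For every integer n ≥ 2, ζ(n+1) − η(n) = Σ_{k=2}^∞ ((−1)^k k + 1)/k^{n+1} > 0, and moreover ζ(n+1) − η(n) > 2^{1−n} μ ζ(n+1) with μ = 65/108. -/
noncomputable def etaR (n : ℕ) : ℝ := ∑' k : ℕ, (-1 : ℝ) ^ k / (k + 1) ^ n

open Finset

lemma summable_one_div_nat_succ_pow {p : ℕ} (hp : 1 < p) :
    Summable (fun k : ℕ => (1 : ℝ) / (k + 1) ^ p) := by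
  simpa using (summable_nat_add_iff 1).mpr (Real.summable_one_div_nat_pow.mpr hp)

lemma summable_neg_one_pow_div_nat_succ_pow {p : ℕ} (hp : 1 < p) :
    Summable (fun k : ℕ => (-1 : ℝ) ^ k / (k + 1) ^ p) :=
  (summable_one_div_nat_succ_pow hp).of_norm_bounded fun k => by
    rw [norm_div, norm_pow, norm_neg, norm_one, one_pow, Real.norm_of_nonneg (by positivity)]

lemma hasSum_zetaR_sub_etaR {n : ℕ} (hn : 1 < n) :
    HasSum (fun k : ℕ => ((-1 : ℝ) ^ (k + 2) * (k + 2) + 1) / (k + 2 : ℝ) ^ (n + 1))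
      (zetaR (n + 1) - etaR n) := by
  have h := (summable_one_div_nat_succ_pow (p := n + 1) (by omega)).hasSum.sub
    (summable_neg_one_pow_div_nat_succ_pow (p := n) (by omega)).hasSum
  have h_first : (1 : ℝ) / ((0 : ℕ) + 1) ^ (n + 1) - (-1) ^ 0 / ((0 : ℕ) + 1) ^ n = 0 := by
    norm_num
  rw [← hasSum_nat_add_iff' 1, sum_range_one, h_first, sub_zero] at h
  refine h.congr_fun fun k => ?_
  push_cast
  rw [pow_succ, pow_succ (k + 1 + 1 : ℝ)]
  field_simp
  ring

lemma Summable.hasSum_add_pairs {G : Type*} [AddCommGroup G] [UniformSpace G]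
    [IsUniformAddGroup G] [CompleteSpace G] [T2Space G] {f : ℕ → G} (hf : Summable f) :
    HasSum (fun m => f (2 * m) + f (2 * m + 1)) (∑' k, f k) := by
  have h_even : Summable fun m => f (2 * m) :=
    hf.comp_injective (mul_right_injective₀ two_ne_zero)
  have h_odd : Summable fun m => f (2 * m + 1) :=
    hf.comp_injective ((add_left_injective 1).comp (mul_right_injective₀ two_ne_zero))
  rw [← tsum_even_add_odd h_even h_odd]
  exact h_even.hasSum.add h_odd.hasSum

noncomputable def pairedTerm (n : ℕ) (a : ℝ) : ℝ :=
  (a + 1) / a ^ (n + 1) - a / (a + 1) ^ (n + 1)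

lemma hasSum_pairedTerm {n : ℕ} (hn : 1 < n) :
    HasSum (fun m : ℕ => pairedTerm n (2 * m + 2)) (zetaR (n + 1) - etaR n) := by
  have h := hasSum_zetaR_sub_etaR hn
  rw [← h.tsum_eq]
  refine h.summable.hasSum_add_pairs.congr_fun fun m => ?_
  have h_even : (-1 : ℝ) ^ (2 * m + 2) = 1 := by rw [pow_add, pow_mul]; norm_num
  have h_odd : (-1 : ℝ) ^ (2 * m + 1 + 2) = -1 := by rw [pow_add, pow_succ, pow_mul]; norm_num
  rw [pairedTerm, h_even, h_odd]
  push_cast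
  ring

lemma le_pairedTerm {a : ℝ} (ha : 0 < a) {n : ℕ} (hn : 2 ≤ n) :
    (a + 1 - a ^ 4 / (a + 1) ^ 3) / a ^ (n + 1) ≤ pairedTerm n a := by
  have h_ratio : (a / (a + 1)) ^ (n + 1) ≤ (a / (a + 1)) ^ 3 :=
    pow_le_pow_of_le_one (by positivity) ((div_le_one (by positivity)).mpr (by linarith))
      (by omega)
  have h_last : a / (a + 1) ^ (n + 1) = a * (a / (a + 1)) ^ (n + 1) / a ^ (n + 1) := by
    rw [div_pow]
    field_simp
  have h_quartic : a ^ 4 / (a + 1) ^ 3 = a * (a / (a + 1)) ^ 3 := by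
    field_simp
  rw [pairedTerm, h_last, h_quartic, sub_div]
  gcongr

lemma add_one_sub_pow_four_div_eq (a : ℝ) (ha : a + 1 ≠ 0) :
    a + 1 - a ^ 4 / (a + 1) ^ 3 =
      65 / 27 + (a - 2) * (43 * a ^ 2 + 53 * a + 19) / (27 * (a + 1) ^ 3) := by
  field_simp
  ring

lemma le_add_one_sub_pow_four_div {a : ℝ} (ha : 2 ≤ a) :
    65 / 27 ≤ a + 1 - a ^ 4 / (a + 1) ^ 3 := by
  rw [add_one_sub_pow_four_div_eq a (by positivity), le_add_iff_nonneg_right]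
  exact div_nonneg (mul_nonneg (by linarith) (by positivity)) (by positivity)

lemma lt_add_one_sub_pow_four_div {a : ℝ} (ha : 2 < a) :
    65 / 27 < a + 1 - a ^ 4 / (a + 1) ^ 3 := by
  rw [add_one_sub_pow_four_div_eq a (by positivity), lt_add_iff_pos_right]
  exact div_pos (mul_pos (by linarith) (by positivity)) (by positivity)

lemma tsum_one_div_two_mul_add_two_pow (p : ℕ) :
    ∑' m : ℕ, (1 : ℝ) / (2 * m + 2) ^ p = zetaR p / 2 ^ p := by
  rw [zetaR, ← tsum_div_const]
  congr 1
  funext m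
  rw [show (2 * m + 2 : ℝ) = 2 * (m + 1) by ring, mul_pow]
  field_simp

lemma zetaR_sub_etaR_gt {n : ℕ} (hn : 2 ≤ n) :
    2 ^ (1 - (n : ℤ)) * (65 / 108) * zetaR (n + 1) < zetaR (n + 1) - etaR n := by
  have h_pairs := hasSum_pairedTerm hn
  have h_lhs : 2 ^ (1 - (n : ℤ)) * (65 / 108) * zetaR (n + 1) =
      ∑' m : ℕ, (65 / 27 : ℝ) / (2 * m + 2) ^ (n + 1) := by
    simp_rw [div_eq_mul_one_div (65 / 27 : ℝ)]
    rw [tsum_mul_left, tsum_one_div_two_mul_add_two_pow, zpow_sub₀ two_ne_zero, zpow_one,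
      zpow_natCast, pow_succ]
    field_simp
    ring
  rw [h_lhs, ← h_pairs.tsum_eq]
  refine Summable.tsum_lt_tsum_of_nonneg (i := 1) (fun m => by positivity) (fun m => ?_) ?_
    h_pairs.summable
  · refine le_trans ?_ (le_pairedTerm (by positivity) hn)
    gcongr
    exact le_add_one_sub_pow_four_div (by linarith [m.cast_nonneg (α := ℝ)])
  · refine lt_of_lt_of_le ?_ (le_pairedTerm (by positivity) hn)
    gcongr
    exact lt_add_one_sub_pow_four_div (by norm_num)

theorem zeta_sub_eta (n : ℕ) (hn : 2 ≤ n) :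
    zetaR (n + 1) - etaR n =
      (∑' k : ℕ, ((-1 : ℝ) ^ (k + 2) * (k + 2) + 1) / (k + 2 : ℝ) ^ (n + 1)) ∧
    zetaR (n + 1) - etaR n > 0 ∧
    zetaR (n + 1) - etaR n > 2 ^ (1 - (n : ℤ)) * (65 / 108) * zetaR (n + 1) := by
  have h_lower := zetaR_sub_etaR_gt hn
  have h_zeta : 0 ≤ zetaR (n + 1) := tsum_nonneg fun k => by positivity
  refine ⟨(hasSum_zetaR_sub_etaR hn).tsum_eq.symm, ?_, h_lower⟩
  exact lt_of_le_of_lt (by positivity) h_lower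
end

section
/- For every integer n ≥ 2, 2ζ(2n+1) − η(2n+2) − ζ(2n−1) < 1 − (ζ(2n) + ζ(2n+1))/2 < 0. -/
theorem summable_inv_succ_pow {p : ℕ} (hp : 2 ≤ p) :
    Summable fun k : ℕ => ((k + 1 : ℝ)⁻¹) ^ p := by
  have := (summable_nat_add_iff 1).2 (Real.summable_nat_pow_inv.2 hp)
  simpa [inv_pow] using this

theorem hasSum_zetaR {p : ℕ} (hp : 2 ≤ p) :
    HasSum (fun k : ℕ => ((k + 1 : ℝ)⁻¹) ^ p) (zetaR p) := by
  convert (summable_inv_succ_pow hp).hasSum using 1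
  simp [zetaR, inv_pow]

theorem hasSum_etaR {p : ℕ} (hp : 2 ≤ p) :
    HasSum (fun k : ℕ => (-1) ^ k * ((k + 1 : ℝ)⁻¹) ^ p) (etaR p) := by
  have : Summable fun k : ℕ => (-1) ^ k * ((k + 1 : ℝ)⁻¹) ^ p :=
    (summable_inv_succ_pow hp).of_norm_bounded fun k => by
      simp [abs_of_pos (k.cast_add_one_pos (α := ℝ))]
  convert this.hasSum using 1
  simp [etaR, div_eq_mul_inv, inv_pow]

theorem one_lt_zetaR {p : ℕ} (hp : 2 ≤ p) : 1 < zetaR p :=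
  hasSum_lt (f := fun k => if k = 0 then 1 else 0) (i := 1)
    (fun k => by rcases k with _ | k <;> simp; positivity) (by simp)
    (hasSum_ite_eq 0 1) (hasSum_zetaR hp)

noncomputable def zetaEtaTerm (m : ℕ) (s x : ℝ) : ℝ :=
  2 * x ^ (m + 2) - s * x ^ (m + 3) - x ^ m + (x ^ (m + 1) + x ^ (m + 2)) / 2

theorem zetaEtaTerm_eq (m : ℕ) (s x : ℝ) :
    zetaEtaTerm m s x = x ^ m * ((x - 1 / 2) * (x + 1) * (x + 2) - (1 + s) * x ^ 3) := by
  unfold zetaEtaTerm; ring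

theorem zetaEtaTerm_nonpos (m : ℕ) {s x : ℝ} (hs : -1 ≤ s) (hx₀ : 0 ≤ x) (hx : x ≤ 1 / 2) :
    zetaEtaTerm m s x ≤ 0 := by
  rw [zetaEtaTerm_eq]
  refine mul_nonpos_of_nonneg_of_nonpos (by positivity) ?_
  have : (x - 1 / 2) * (x + 1) * (x + 2) ≤ 0 :=
    mul_nonpos_of_nonpos_of_nonneg
      (mul_nonpos_of_nonpos_of_nonneg (by linarith) (by linarith)) (by linarith)
  nlinarith [pow_nonneg hx₀ 3]

theorem zetaEtaTerm_neg (m : ℕ) {s x : ℝ} (hs : -1 ≤ s) (hx₀ : 0 < x) (hx : x < 1 / 2) :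
    zetaEtaTerm m s x < 0 := by
  rw [zetaEtaTerm_eq]
  refine mul_neg_of_pos_of_neg (by positivity) ?_
  have : (x - 1 / 2) * (x + 1) * (x + 2) < 0 :=
    mul_neg_of_neg_of_pos (mul_neg_of_neg_of_pos (by linarith) (by linarith)) (by linarith)
  nlinarith [pow_nonneg hx₀.le 3]

theorem zetaEta_combination_lt_one {m : ℕ} (hm : 2 ≤ m) :
    2 * zetaR (m + 2) - etaR (m + 3) - zetaR m + (zetaR (m + 1) + zetaR (m + 2)) / 2 < 1 := by
  have hsum : HasSum (fun k : ℕ => zetaEtaTerm m ((-1) ^ k) (k + 1 : ℝ)⁻¹)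
      (2 * zetaR (m + 2) - etaR (m + 3) - zetaR m + (zetaR (m + 1) + zetaR (m + 2)) / 2) :=
    ((((hasSum_zetaR (by omega)).mul_left 2).sub (hasSum_etaR (by omega))).sub
      (hasSum_zetaR hm)).add (((hasSum_zetaR (by omega)).add (hasSum_zetaR (by omega))).div_const 2)
  refine hasSum_lt (g := fun k => if k = 0 then 1 else 0) (i := 2) (fun k => ?_) ?_ hsum
    (hasSum_ite_eq 0 1)
  · rcases k with _ | k
    · norm_num [zetaEtaTerm]
    · have : (k + 1 + 1 : ℝ)⁻¹ ≤ 1 / 2 := by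
        rw [one_div]; gcongr; linarith [k.cast_nonneg (α := ℝ)]
      have hs : (-1 : ℝ) ≤ (-1) ^ (k + 1) := by
        rcases neg_one_pow_eq_or ℝ (k + 1) with h | h <;> norm_num [h]
      simpa using zetaEtaTerm_nonpos m hs (by positivity) this
  · have h := zetaEtaTerm_neg m (s := 1) (x := 3⁻¹) (by norm_num) (by norm_num) (by norm_num)
    norm_num at h ⊢
    exact h

theorem a_sum_neg (n : ℕ) (hn : 2 ≤ n) :
    2 * zetaR (2 * n + 1) - etaR (2 * n + 2) - zetaR (2 * n - 1) <
      1 - (zetaR (2 * n) + zetaR (2 * n + 1)) / 2 ∧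
    1 - (zetaR (2 * n) + zetaR (2 * n + 1)) / 2 < 0 := by
  have hlt := zetaEta_combination_lt_one (m := 2 * n - 1) (by omega)
  rw [show 2 * n - 1 + 2 = 2 * n + 1 by omega, show 2 * n - 1 + 3 = 2 * n + 2 by omega,
    show 2 * n - 1 + 1 = 2 * n by omega] at hlt
  have h₁ := one_lt_zetaR (p := 2 * n) (by omega)
  have h₂ := one_lt_zetaR (p := 2 * n + 1) (by omega)
  exact ⟨by linarith, by linarith⟩
end

section
/- The function P₁(x) = [(x+1)^8 − 1]/[x(x+1)^7] is strictly decreasing on (0, 1/2], mapping (0,1/2] onto [6305/2187, 8). -/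
open Set

noncomputable def P₁ (x : ℝ) : ℝ := ((x + 1) ^ 8 - 1) / (x * (x + 1) ^ 7)

/-!
Substituting `t = (x + 1)⁻¹` turns `P₁` into the geometric sum `1 + t + ⋯ + t⁷`, which is
continuous and strictly increasing in `t ≥ 0`, while `t` decreases from `1` to `2/3` as `x` runs
from `0` to `1/2`. The intermediate value theorem then identifies the image.
-/

open Finset in
theorem strictMonoOn_geom_sum {R : Type*} [Semiring R] [LinearOrder R] [IsStrictOrderedRing R]
    {n : ℕ} (hn : 2 ≤ n) : StrictMonoOn (fun t : R ↦ ∑ i ∈ range n, t ^ i) (Ici 0) :=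
  fun _ hs _ _ hst ↦ sum_lt_sum (fun i _ ↦ pow_le_pow_left₀ hs hst.le i)
    ⟨1, mem_range.2 hn, by simpa using hst⟩

theorem strictAntiOn_inv_add_one : StrictAntiOn (fun x : ℝ ↦ (x + 1)⁻¹) (Ioi (-1)) :=
  fun x (hx : -1 < x) y (hy : -1 < y) hxy ↦
    inv_strictAntiOn (mem_Ioi.2 (by linarith)) (mem_Ioi.2 (by linarith)) (by linarith)

theorem P₁_eq_geom_sum {x : ℝ} (hx : x ≠ 0) (hx1 : x + 1 ≠ 0) :
    P₁ x = ∑ i ∈ Finset.range 8, (x + 1)⁻¹ ^ i := by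
  have hdenom : (x + 1)⁻¹ - 1 = -x / (x + 1) := by field_simp; ring
  rw [geom_sum_eq (by simpa [inv_eq_one] using hx), P₁, hdenom]
  field_simp
  ring

theorem P1_strictAnti :
    StrictAntiOn P₁ (Ioc 0 (1 / 2)) ∧ P₁ '' Ioc 0 (1 / 2) = Ico (6305 / 2187) 8 := by
  set G : ℝ → ℝ := fun x ↦ ∑ i ∈ Finset.range 8, (x + 1)⁻¹ ^ i with hG
  have hG_anti : StrictAntiOn G (Ioi (-1)) :=
    (strictMonoOn_geom_sum (by norm_num)).comp_strictAntiOn strictAntiOn_inv_add_one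
      fun x (hx : -1 < x) ↦ show (0 : ℝ) ≤ (x + 1)⁻¹ from inv_nonneg.2 (by linarith)
  have hG_cont : ContinuousOn G (Ioi (-1)) := by
    have : ContinuousOn (fun x : ℝ ↦ (x + 1)⁻¹) (Ioi (-1)) :=
      (continuous_add_const 1).continuousOn.inv₀ fun x (hx : -1 < x) ↦ ne_of_gt (by linarith)
    fun_prop
  have hIcc : Icc (0 : ℝ) (1 / 2) ⊆ Ioi (-1) := fun x hx ↦ mem_Ioi.2 (by linarith [hx.1])
  have hG_P₁ : EqOn G P₁ (Ioc 0 (1 / 2)) := fun x hx ↦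
    (P₁_eq_geom_sum hx.1.ne' (by linarith [hx.1])).symm
  refine ⟨(hG_anti.mono (Ioc_subset_Icc_self.trans hIcc)).congr hG_P₁, ?_⟩
  rw [← hG_P₁.image_eq,
    (hG_cont.mono hIcc).image_Ioc_of_strictAntiOn (by norm_num) (hG_anti.mono hIcc)]
  norm_num [hG, Finset.sum_range_succ]
end
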